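/- Let s₁,…,s_n ∈ ℝ^{d+1} be n ≥ 2 pairwise-distinct stations lying in the hyperplane {x_{d+1} = 0}, with powers P_i > 0, noise N ≥ 0, threshold β > 0 and path-loss exponent 2α for some real α ≥ 1. Let p₁, p₂ belong to the reception zone H₁ of s₁, suppose p₁ and p₂ have identical first d coordinates, and suppose their last coordinates t₁, t₂ satisfy t₁·t₂ ≥ 0 (they lie on the same side of the hyperplane). Then the straight-line segment [p₁, p₂] is entirely contained in H₁. -/

import Mathlib

open Finset

section AuxLemmas

private lemma rpow_neg_combo {α x y a b : ℝ} (hα : 0 ≤ α) (hx : 0 < x) (hy : 0 < y)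
    (ha : 0 ≤ a) (hb : 0 ≤ b) (hab : a + b = 1) :
    (a * x + b * y) ^ (-α) ≤ a * x ^ (-α) + b * y ^ (-α) := by
  have hxy : 0 < a * x + b * y := by
    have h1 : min x y ≤ a * x + b * y := by
      calc min x y = a * min x y + b * min x y := by rw [← add_mul, hab, one_mul]
      _ ≤ a * x + b * y := by gcongr <;> [exact min_le_left _ _; exact min_le_right _ _]
    exact lt_of_lt_of_le (lt_min hx hy) h1
  have hlog : a * Real.log x + b * Real.log y ≤ Real.log (a * x + b * y) := by
    have := strictConcaveOn_log_Ioi.concaveOn.2 (Set.mem_Ioi.2 hx) (Set.mem_Ioi.2 hy) ha hb hab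
    simpa using this
  have step1 : (a * x + b * y) ^ (-α) ≤ Real.exp ((a * Real.log x + b * Real.log y) * (-α)) := by
    rw [Real.rpow_def_of_pos hxy]
    exact Real.exp_le_exp.2 (by nlinarith)
  have step2 : Real.exp ((a * Real.log x + b * Real.log y) * (-α))
      ≤ a * Real.exp (Real.log x * (-α)) + b * Real.exp (Real.log y * (-α)) := by
    have := convexOn_exp.2 (Set.mem_univ (Real.log x * (-α)))
      (Set.mem_univ (Real.log y * (-α))) ha hb hab
    simpa [mul_comm, mul_assoc, mul_left_comm, add_mul, mul_add] using this
  calc (a * x + b * y) ^ (-α) ≤ Real.exp ((a * Real.log x + b * Real.log y) * (-α)) := step1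
    _ ≤ a * Real.exp (Real.log x * (-α)) + b * Real.exp (Real.log y * (-α)) := step2
    _ = a * x ^ (-α) + b * y ^ (-α) := by
        rw [← Real.rpow_def_of_pos hx, ← Real.rpow_def_of_pos hy]

private lemma cond_translate {ι : Type*} {S : Finset ι} (P A : ι → ℝ) (β N α Pi Ai u : ℝ)
    (hx : 0 < Ai + u) (hB : ∀ j ∈ S, 0 < A j + u) :
    (β * ((∑ j ∈ S, P j * (A j + u) ^ (-α)) + N) ≤ Pi * (Ai + u) ^ (-α)) ↔
    (β * ((∑ j ∈ S, P j * (1 + (A j - Ai) * (Ai + u)⁻¹) ^ (-α))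
      + N * ((Ai + u)⁻¹) ^ (-α)) ≤ Pi) := by
  have hX : 0 < (Ai + u) ^ (-α) := Real.rpow_pos_of_pos hx _
  have key : ∀ j ∈ S, P j * (1 + (A j - Ai) * (Ai + u)⁻¹) ^ (-α)
      = P j * (A j + u) ^ (-α) / (Ai + u) ^ (-α) := by
    intro j hj
    rw [show (1 + (A j - Ai) * (Ai + u)⁻¹) = (A j + u) / (Ai + u) by field_simp; ring,
      Real.div_rpow (hB j hj).le hx.le, mul_div_assoc]
  rw [Finset.sum_congr rfl key, ← Finset.sum_div, Real.inv_rpow hx.le]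
  have e : β * ((∑ j ∈ S, P j * (A j + u) ^ (-α)) / (Ai + u) ^ (-α)
        + N * ((Ai + u) ^ (-α))⁻¹)
      = (β * ((∑ j ∈ S, P j * (A j + u) ^ (-α)) + N)) / (Ai + u) ^ (-α) := by
    field_simp
  rw [e, div_le_iff₀ hX]

private lemma core_ineq {ι : Type*} {S : Finset ι} (P c : ι → ℝ) (hP : ∀ j ∈ S, 0 ≤ P j)
    (β N α : ℝ) (hβ : 0 ≤ β) (hN : 0 ≤ N) (hα : 0 ≤ α)
    (w₁ w₂ a b Pi : ℝ) (hw₁ : 0 < w₁) (hw₂ : 0 < w₂)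
    (hc1 : ∀ j ∈ S, 0 < 1 + c j * w₁) (hc2 : ∀ j ∈ S, 0 < 1 + c j * w₂)
    (ha : 0 ≤ a) (hb : 0 ≤ b) (hab : a + b = 1)
    (H1 : β * ((∑ j ∈ S, P j * (1 + c j * w₁) ^ (-α)) + N * w₁ ^ (-α)) ≤ Pi)
    (H2 : β * ((∑ j ∈ S, P j * (1 + c j * w₂) ^ (-α)) + N * w₂ ^ (-α)) ≤ Pi) :
    β * ((∑ j ∈ S, P j * (1 + c j * (a * w₁ + b * w₂)) ^ (-α))
      + N * (a * w₁ + b * w₂) ^ (-α)) ≤ Pi := by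
  have hsum : (∑ j ∈ S, P j * (1 + c j * (a * w₁ + b * w₂)) ^ (-α))
      ≤ a * (∑ j ∈ S, P j * (1 + c j * w₁) ^ (-α))
        + b * (∑ j ∈ S, P j * (1 + c j * w₂) ^ (-α)) := by
    rw [Finset.mul_sum, Finset.mul_sum, ← Finset.sum_add_distrib]
    refine Finset.sum_le_sum fun j hj => ?_
    have hcombo := rpow_neg_combo hα (hc1 j hj) (hc2 j hj) ha hb hab
    have e : a * (1 + c j * w₁) + b * (1 + c j * w₂) = 1 + c j * (a * w₁ + b * w₂) := by
      linear_combination (1 + 0 * c j) * hab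
    rw [e] at hcombo
    calc P j * (1 + c j * (a * w₁ + b * w₂)) ^ (-α)
        ≤ P j * (a * (1 + c j * w₁) ^ (-α) + b * (1 + c j * w₂) ^ (-α)) :=
          mul_le_mul_of_nonneg_left hcombo (hP j hj)
      _ = a * (P j * (1 + c j * w₁) ^ (-α)) + b * (P j * (1 + c j * w₂) ^ (-α)) := by ring
  have hNterm : N * (a * w₁ + b * w₂) ^ (-α)
      ≤ a * (N * w₁ ^ (-α)) + b * (N * w₂ ^ (-α)) := by
    have hcombo := rpow_neg_combo hα hw₁ hw₂ ha hb hab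
    calc N * (a * w₁ + b * w₂) ^ (-α) ≤ N * (a * w₁ ^ (-α) + b * w₂ ^ (-α)) :=
          mul_le_mul_of_nonneg_left hcombo hN
      _ = a * (N * w₁ ^ (-α)) + b * (N * w₂ ^ (-α)) := by ring
  have hmain : β * ((∑ j ∈ S, P j * (1 + c j * (a * w₁ + b * w₂)) ^ (-α))
      + N * (a * w₁ + b * w₂) ^ (-α))
      ≤ a * (β * ((∑ j ∈ S, P j * (1 + c j * w₁) ^ (-α)) + N * w₁ ^ (-α)))
      + b * (β * ((∑ j ∈ S, P j * (1 + c j * w₂) ^ (-α)) + N * w₂ ^ (-α))) := by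
    have h := add_le_add hsum hNterm
    nlinarith [h]
  calc _ ≤ _ := hmain
    _ ≤ a * Pi + b * Pi :=
        add_le_add (mul_le_mul_of_nonneg_left H1 ha) (mul_le_mul_of_nonneg_left H2 hb)
    _ = Pi := by rw [← add_mul, hab, one_mul]

private lemma cond_mono {ι : Type*} {S : Finset ι} (P A : ι → ℝ) (hP : ∀ j ∈ S, 0 ≤ P j)
    (hA : ∀ j ∈ S, 0 ≤ A j) (β N α Pi : ℝ) (hβ : 0 ≤ β) (hN : 0 ≤ N) (hα : 0 ≤ α)
    (u u₂ : ℝ) (hu : 0 < u) (hle : u ≤ u₂)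
    (H2 : β * ((∑ j ∈ S, P j * (A j + u₂) ^ (-α)) + N) ≤ Pi * u₂ ^ (-α)) :
    β * ((∑ j ∈ S, P j * (A j + u) ^ (-α)) + N) ≤ Pi * u ^ (-α) := by
  have hu₂ : 0 < u₂ := lt_of_lt_of_le hu hle
  have hB : ∀ j ∈ S, 0 < A j + u := fun j hj => by linarith [hA j hj]
  have hB₂ : ∀ j ∈ S, 0 < A j + u₂ := fun j hj => by linarith [hA j hj]
  have T1 := cond_translate P A β N α Pi 0 u (by linarith) hB
  have T2 := cond_translate P A β N α Pi 0 u₂ (by linarith) hB₂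
  simp only [zero_add, sub_zero] at T1 T2
  rw [T1]
  rw [T2] at H2
  refine le_trans ?_ H2
  have hterm : ∀ j ∈ S, P j * (1 + A j * u⁻¹) ^ (-α) ≤ P j * (1 + A j * u₂⁻¹) ^ (-α) := by
    intro j hj
    refine mul_le_mul_of_nonneg_left ?_ (hP j hj)
    have h1 : (0:ℝ) < 1 + A j * u₂⁻¹ := by
      have h0 : 0 ≤ A j * u₂⁻¹ := mul_nonneg (hA j hj) (by positivity)
      linarith
    have h2 : 1 + A j * u₂⁻¹ ≤ 1 + A j * u⁻¹ := by
      have hi : u⁻¹ ≥ u₂⁻¹ := by apply inv_anti₀ hu hle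
      nlinarith [hA j hj]
    exact Real.rpow_le_rpow_of_nonpos h1 h2 (by linarith)
  have hNt : N * (u⁻¹) ^ (-α) ≤ N * (u₂⁻¹) ^ (-α) := by
    refine mul_le_mul_of_nonneg_left ?_ hN
    exact Real.rpow_le_rpow_of_nonpos (by positivity) (by gcongr) (by linarith)
  have hsum := Finset.sum_le_sum hterm
  nlinarith [hsum, hNt]

private lemma sq_combo_between {t₁ t₂ a b : ℝ} (hsign : 0 ≤ t₁ * t₂) (ha : 0 ≤ a) (hb : 0 ≤ b)
    (hab : a + b = 1) :
    min (t₁ ^ 2) (t₂ ^ 2) ≤ (a * t₁ + b * t₂) ^ 2 ∧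
      (a * t₁ + b * t₂) ^ 2 ≤ max (t₁ ^ 2) (t₂ ^ 2) := by
  have hba : a = 1 - b := by linarith
  subst hba
  rcases le_total (t₁ ^ 2) (t₂ ^ 2) with h | h
  · have h12 : |t₁| ≤ |t₂| := by
      rw [← Real.sqrt_sq_eq_abs, ← Real.sqrt_sq_eq_abs]; exact Real.sqrt_le_sqrt h
    have key1 : t₁ ^ 2 ≤ t₁ * t₂ := by
      calc t₁ ^ 2 = |t₁| * |t₁| := by rw [abs_mul_abs_self]; ring
        _ ≤ |t₁| * |t₂| := mul_le_mul_of_nonneg_left h12 (abs_nonneg _)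
        _ = |t₁ * t₂| := (abs_mul _ _).symm
        _ = t₁ * t₂ := abs_of_nonneg hsign
    have key2 : t₁ * t₂ ≤ t₂ ^ 2 := by
      calc t₁ * t₂ = |t₁ * t₂| := (abs_of_nonneg hsign).symm
        _ = |t₁| * |t₂| := abs_mul _ _
        _ ≤ |t₂| * |t₂| := mul_le_mul_of_nonneg_right h12 (abs_nonneg _)
        _ = t₂ ^ 2 := by rw [abs_mul_abs_self]; ring
    rw [min_eq_left h, max_eq_right h]
    constructor
    · nlinarith [mul_nonneg (mul_nonneg ha hb) (sub_nonneg.2 key1),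
        mul_nonneg (mul_nonneg hb hb) (sub_nonneg.2 h)]
    · nlinarith [mul_nonneg (mul_nonneg ha hb) (sub_nonneg.2 key2),
        mul_nonneg (mul_nonneg ha ha) (sub_nonneg.2 h)]
  · have h12 : |t₂| ≤ |t₁| := by
      rw [← Real.sqrt_sq_eq_abs, ← Real.sqrt_sq_eq_abs]; exact Real.sqrt_le_sqrt h
    have key1 : t₂ ^ 2 ≤ t₁ * t₂ := by
      calc t₂ ^ 2 = |t₂| * |t₂| := by rw [abs_mul_abs_self]; ring
        _ ≤ |t₁| * |t₂| := mul_le_mul_of_nonneg_right h12 (abs_nonneg _)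
        _ = |t₁ * t₂| := (abs_mul _ _).symm
        _ = t₁ * t₂ := abs_of_nonneg hsign
    have key2 : t₁ * t₂ ≤ t₁ ^ 2 := by
      calc t₁ * t₂ = |t₁ * t₂| := (abs_of_nonneg hsign).symm
        _ = |t₁| * |t₂| := abs_mul _ _
        _ ≤ |t₁| * |t₁| := mul_le_mul_of_nonneg_left h12 (abs_nonneg _)
        _ = t₁ ^ 2 := by rw [abs_mul_abs_self]; ring
    rw [min_eq_right h, max_eq_left h]
    constructor
    · nlinarith [mul_nonneg (mul_nonneg ha hb) (sub_nonneg.2 key1),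
        mul_nonneg (mul_nonneg ha ha) (sub_nonneg.2 h)]
    · nlinarith [mul_nonneg (mul_nonneg ha hb) (sub_nonneg.2 key2),
        mul_nonneg (mul_nonneg hb hb) (sub_nonneg.2 h)]

end AuxLemmas

/-- SINR of station `i` at point `p`, for stations `s`, powers `P`, noise `N`
and path-loss exponent `2α`. -/
noncomputable def sinrA {m n : ℕ} (s : Fin n → EuclideanSpace ℝ (Fin m))
    (P : Fin n → ℝ) (N α : ℝ) (i : Fin n) (p : EuclideanSpace ℝ (Fin m)) : ℝ :=
  P i * dist p (s i) ^ (-(2 * α)) /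
    ((∑ j ∈ Finset.univ.erase i, P j * dist p (s j) ^ (-(2 * α))) + N)

/-- The reception zone of station `i` (path-loss exponent `2α`). -/
noncomputable def recZoneA {m n : ℕ} (s : Fin n → EuclideanSpace ℝ (Fin m))
    (P : Fin n → ℝ) (N α β : ℝ) (i : Fin n) : Set (EuclideanSpace ℝ (Fin m)) :=
  {p | p ∉ Set.range s ∧ β ≤ sinrA s P N α i p} ∪ {s i}

theorem vertical_segment_in_zone {d n : ℕ} (hn : 2 ≤ n)
    (s : Fin n → EuclideanSpace ℝ (Fin (d + 1))) (hs : Function.Injective s)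
    (hplane : ∀ j, s j (Fin.last d) = 0)
    (P : Fin n → ℝ) (hP : ∀ j, 0 < P j)
    (N β α : ℝ) (hN : 0 ≤ N) (hβ : 0 < β) (hα : 1 ≤ α)
    (i : Fin n)
    (p₁ p₂ : EuclideanSpace ℝ (Fin (d + 1)))
    (hp₁ : p₁ ∈ recZoneA s P N α β i) (hp₂ : p₂ ∈ recZoneA s P N α β i)
    (hproj : ∀ k : Fin (d + 1), k ≠ Fin.last d → p₁ k = p₂ k)
    (hsign : 0 ≤ p₁ (Fin.last d) * p₂ (Fin.last d)) :
    segment ℝ p₁ p₂ ⊆ recZoneA s P N α β i := by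
  intro q hq
  obtain ⟨a, b, ha, hb, hab, rfl⟩ := hq
  set A : Fin n → ℝ := fun j => ∑ k ∈ Finset.univ.erase (Fin.last d), (p₁ k - s j k) ^ 2 with hA
  have hA0 : ∀ j, 0 ≤ A j := fun j => Finset.sum_nonneg fun k _ => sq_nonneg _
  have happ : ∀ k, (a • p₁ + b • p₂) k = a * p₁ k + b * p₂ k := fun k => rfl
  have hqk : ∀ k, k ≠ Fin.last d → (a • p₁ + b • p₂) k = p₁ k := by
    intro k hk
    rw [happ, ← hproj k hk]
    linear_combination p₁ k * hab
  have hqlast : (a • p₁ + b • p₂) (Fin.last d) = a * p₁ (Fin.last d) + b * p₂ (Fin.last d) :=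
    happ _
  -- distance formulas
  have hd : ∀ r : EuclideanSpace ℝ (Fin (d + 1)), (∀ k, k ≠ Fin.last d → r k = p₁ k) →
      ∀ j, dist r (s j) = Real.sqrt (A j + (r (Fin.last d)) ^ 2) := by
    intro r hr j
    rw [EuclideanSpace.dist_eq]
    congr 1
    rw [← Finset.sum_erase_add _ _ (Finset.mem_univ (Fin.last d))]
    congr 1
    · refine Finset.sum_congr rfl fun k hk => ?_
      rw [Real.dist_eq, sq_abs, hr k (Finset.ne_of_mem_erase hk)]
    · rw [Real.dist_eq, sq_abs, hplane j, sub_zero]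
  have hdp : ∀ r : EuclideanSpace ℝ (Fin (d + 1)), (∀ k, k ≠ Fin.last d → r k = p₁ k) →
      ∀ j, dist r (s j) ^ (-(2 * α)) = (A j + (r (Fin.last d)) ^ 2) ^ (-α) := by
    intro r hr j
    have hv : (0:ℝ) ≤ A j + (r (Fin.last d)) ^ 2 := by positivity
    rw [hd r hr j, Real.sqrt_eq_rpow, ← Real.rpow_mul hv]
    congr 1
    ring
  -- non-membership of the range
  have hnr : ∀ r : EuclideanSpace ℝ (Fin (d + 1)), (∀ k, k ≠ Fin.last d → r k = p₁ k) →
      (∀ j, 0 < A j + (r (Fin.last d)) ^ 2) → r ∉ Set.range s := by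
    rintro r hr hpos ⟨j, hj⟩
    have h1 : dist r (s j) = 0 := by rw [hj]; simp
    rw [hd r hr j] at h1
    exact absurd h1 (ne_of_gt (Real.sqrt_pos.2 (hpos j)))
  have hpos_of : ∀ r : EuclideanSpace ℝ (Fin (d + 1)), (∀ k, k ≠ Fin.last d → r k = p₁ k) →
      r ∉ Set.range s → ∀ j, 0 < A j + (r (Fin.last d)) ^ 2 := by
    intro r hr hnm j
    have hne : r ≠ s j := fun h => hnm ⟨j, h.symm⟩
    have h1 : 0 < dist r (s j) := dist_pos.2 hne
    rw [hd r hr j] at h1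
    by_contra hle
    push_neg at hle
    rw [Real.sqrt_eq_zero'.2 hle] at h1
    exact lt_irrefl 0 h1
  -- the SINR characterisation
  have hiff : ∀ r : EuclideanSpace ℝ (Fin (d + 1)), (∀ k, k ≠ Fin.last d → r k = p₁ k) →
      (∀ j, j ≠ i → 0 < A j + (r (Fin.last d)) ^ 2) →
      ((β ≤ sinrA s P N α i r) ↔
        β * ((∑ j ∈ Finset.univ.erase i, P j * (A j + (r (Fin.last d)) ^ 2) ^ (-α)) + N)
          ≤ P i * (A i + (r (Fin.last d)) ^ 2) ^ (-α)) := by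
    intro r hr hpos
    have hsumeq : (∑ j ∈ Finset.univ.erase i, P j * dist r (s j) ^ (-(2 * α)))
        = ∑ j ∈ Finset.univ.erase i, P j * (A j + (r (Fin.last d)) ^ 2) ^ (-α) :=
      Finset.sum_congr rfl fun j _ => by rw [hdp r hr j]
    have hD : 0 < (∑ j ∈ Finset.univ.erase i, P j * dist r (s j) ^ (-(2 * α))) + N := by
      obtain ⟨j₀, hj₀⟩ := Fintype.exists_ne_of_one_lt_card (by rw [Fintype.card_fin]; omega) i
      have hterm : 0 < P j₀ * dist r (s j₀) ^ (-(2 * α)) := by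
        rw [hdp r hr j₀]
        exact mul_pos (hP j₀) (Real.rpow_pos_of_pos (hpos j₀ hj₀) _)
      have hle : P j₀ * dist r (s j₀) ^ (-(2 * α))
          ≤ ∑ j ∈ Finset.univ.erase i, P j * dist r (s j) ^ (-(2 * α)) :=
        Finset.single_le_sum
          (fun j _ => mul_nonneg (hP j).le (Real.rpow_nonneg dist_nonneg _))
          (Finset.mem_erase.2 ⟨hj₀, Finset.mem_univ _⟩)
      linarith
    rw [sinrA, le_div_iff₀ hD, hsumeq, hdp r hr i]
  -- main case analysis
  simp only [recZoneA, Set.mem_union, Set.mem_setOf_eq, Set.mem_singleton_iff] at hp₁ hp₂ ⊢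
  by_cases hqsi : a • p₁ + b • p₂ = s i
  · exact Or.inr hqsi
  rcases hp₁ with ⟨hr₁, hs₁⟩ | h₁si
  · rcases hp₂ with ⟨hr₂, hs₂⟩ | h₂si
    · -- both endpoints are proper reception points
      have hpos1 : ∀ j, 0 < A j + (p₁ (Fin.last d)) ^ 2 := hpos_of p₁ (fun _ _ => rfl) hr₁
      have hpos2 : ∀ j, 0 < A j + (p₂ (Fin.last d)) ^ 2 :=
        hpos_of p₂ (fun k hk => (hproj k hk).symm) hr₂
      have hbet := sq_combo_between hsign ha hb hab
      have hposq : ∀ j, 0 < A j + (a * p₁ (Fin.last d) + b * p₂ (Fin.last d)) ^ 2 := by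
        intro j
        have hmin : 0 < A j + min ((p₁ (Fin.last d)) ^ 2) ((p₂ (Fin.last d)) ^ 2) := by
          rcases le_total ((p₁ (Fin.last d)) ^ 2) ((p₂ (Fin.last d)) ^ 2) with h | h
          · rw [min_eq_left h]; exact hpos1 j
          · rw [min_eq_right h]; exact hpos2 j
        linarith [hbet.1]
      have hcond1 := (hiff p₁ (fun _ _ => rfl) (fun j _ => hpos1 j)).1 hs₁
      have hcond2 := (hiff p₂ (fun k hk => (hproj k hk).symm) (fun j _ => hpos2 j)).1 hs₂
      have H1 := (cond_translate P A β N α (P i) (A i) ((p₁ (Fin.last d)) ^ 2)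
        (hpos1 i) (fun j _ => hpos1 j)).1 hcond1
      have H2 := (cond_translate P A β N α (P i) (A i) ((p₂ (Fin.last d)) ^ 2)
        (hpos2 i) (fun j _ => hpos2 j)).1 hcond2
      have hw₁ : 0 < (A i + (p₁ (Fin.last d)) ^ 2)⁻¹ := inv_pos.2 (hpos1 i)
      have hw₂ : 0 < (A i + (p₂ (Fin.last d)) ^ 2)⁻¹ := inv_pos.2 (hpos2 i)
      -- w lies in the segment between w₁ and w₂
      have hwmem : (A i + (a * p₁ (Fin.last d) + b * p₂ (Fin.last d)) ^ 2)⁻¹ ∈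
          Set.uIcc (A i + (p₁ (Fin.last d)) ^ 2)⁻¹ (A i + (p₂ (Fin.last d)) ^ 2)⁻¹ := by
        rcases le_total ((p₁ (Fin.last d)) ^ 2) ((p₂ (Fin.last d)) ^ 2) with h | h
        · have hl : (p₁ (Fin.last d)) ^ 2 ≤ (a * p₁ (Fin.last d) + b * p₂ (Fin.last d)) ^ 2 := by
            have := hbet.1; rw [min_eq_left h] at this; exact this
          have hr : (a * p₁ (Fin.last d) + b * p₂ (Fin.last d)) ^ 2 ≤ (p₂ (Fin.last d)) ^ 2 := by
            have := hbet.2; rw [max_eq_right h] at this; exact this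
          rw [Set.mem_uIcc]
          right
          constructor
          · exact inv_anti₀ (hposq i) (by linarith)
          · exact inv_anti₀ (hpos1 i) (by linarith)
        · have hl : (p₂ (Fin.last d)) ^ 2 ≤ (a * p₁ (Fin.last d) + b * p₂ (Fin.last d)) ^ 2 := by
            have := hbet.1; rw [min_eq_right h] at this; exact this
          have hr : (a * p₁ (Fin.last d) + b * p₂ (Fin.last d)) ^ 2 ≤ (p₁ (Fin.last d)) ^ 2 := by
            have := hbet.2; rw [max_eq_left h] at this; exact this
          rw [Set.mem_uIcc]
          left
          constructor
          · exact inv_anti₀ (hposq i) (by linarith)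
          · exact inv_anti₀ (hpos2 i) (by linarith)
      rw [← segment_eq_uIcc] at hwmem
      obtain ⟨a', b', ha', hb', hab', hw⟩ := hwmem
      rw [smul_eq_mul, smul_eq_mul] at hw
      have hc1 : ∀ j ∈ Finset.univ.erase i,
          0 < 1 + (A j - A i) * (A i + (p₁ (Fin.last d)) ^ 2)⁻¹ := by
        intro j _
        have h0 : (A i + (p₁ (Fin.last d)) ^ 2) ≠ 0 := (hpos1 i).ne'
        have e : 1 + (A j - A i) * (A i + (p₁ (Fin.last d)) ^ 2)⁻¹
            = (A j + (p₁ (Fin.last d)) ^ 2) * (A i + (p₁ (Fin.last d)) ^ 2)⁻¹ := by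
          field_simp
          ring
        rw [e]
        exact mul_pos (hpos1 j) hw₁
      have hc2 : ∀ j ∈ Finset.univ.erase i,
          0 < 1 + (A j - A i) * (A i + (p₂ (Fin.last d)) ^ 2)⁻¹ := by
        intro j _
        have h0 : (A i + (p₂ (Fin.last d)) ^ 2) ≠ 0 := (hpos2 i).ne'
        have e : 1 + (A j - A i) * (A i + (p₂ (Fin.last d)) ^ 2)⁻¹
            = (A j + (p₂ (Fin.last d)) ^ 2) * (A i + (p₂ (Fin.last d)) ^ 2)⁻¹ := by
          field_simp
          ring
        rw [e]
        exact mul_pos (hpos2 j) hw₂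
      have H := core_ineq (S := Finset.univ.erase i) P (fun j => A j - A i)
        (fun j _ => (hP j).le) β N α hβ.le hN (by linarith) _ _ a' b' (P i) hw₁ hw₂
        hc1 hc2 ha' hb' hab' H1 H2
      rw [hw] at H
      have hfinal := (cond_translate P A β N α (P i) (A i)
        ((a * p₁ (Fin.last d) + b * p₂ (Fin.last d)) ^ 2) (hposq i) (fun j _ => hposq j)).2 H
      refine Or.inl ⟨hnr _ hqk (fun j => by rw [hqlast]; exact hposq j), ?_⟩
      rw [hiff _ hqk (fun j _ => by rw [hqlast]; exact hposq j), hqlast]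
      exact hfinal
    · -- p₂ = s i
      have ht2 : p₂ (Fin.last d) = 0 := by rw [h₂si]; exact hplane i
      have hAi : A i = 0 := Finset.sum_eq_zero fun k hk => by
        rw [hproj k (Finset.ne_of_mem_erase hk), h₂si]; ring
      by_cases hτ0 : a * p₁ (Fin.last d) + b * p₂ (Fin.last d) = 0
      · exfalso
        apply hqsi
        ext k
        by_cases hk : k = Fin.last d
        · subst hk
          rw [hqlast, hτ0, hplane i]
        · rw [hqk k hk, hproj k hk, h₂si]
      · have hu : 0 < (a * p₁ (Fin.last d) + b * p₂ (Fin.last d)) ^ 2 :=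
          pow_two_pos_of_ne_zero hτ0
        have hle : (a * p₁ (Fin.last d) + b * p₂ (Fin.last d)) ^ 2 ≤ (p₁ (Fin.last d)) ^ 2 := by
          rw [ht2]
          nlinarith [mul_nonneg (by linarith : (0:ℝ) ≤ 1 - a) (sq_nonneg (p₁ (Fin.last d))),
            mul_nonneg (mul_nonneg ha (by linarith : (0:ℝ) ≤ 1 - a)) (sq_nonneg (p₁ (Fin.last d)))]
        have hpos1 : ∀ j, 0 < A j + (p₁ (Fin.last d)) ^ 2 := hpos_of p₁ (fun _ _ => rfl) hr₁
        have hcond1 := (hiff p₁ (fun _ _ => rfl) (fun j _ => hpos1 j)).1 hs₁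
        rw [hAi, zero_add] at hcond1
        have hcondu := cond_mono (S := Finset.univ.erase i) P A (fun j _ => (hP j).le)
          (fun j _ => hA0 j) β N α (P i) hβ.le hN (by linarith) _ _ hu hle hcond1
        have hposq : ∀ j, 0 < A j + (a * p₁ (Fin.last d) + b * p₂ (Fin.last d)) ^ 2 :=
          fun j => add_pos_of_nonneg_of_pos (hA0 j) hu
        refine Or.inl ⟨hnr _ hqk (fun j => by rw [hqlast]; exact hposq j), ?_⟩
        rw [hiff _ hqk (fun j _ => by rw [hqlast]; exact hposq j), hqlast, hAi, zero_add]
        exact hcondu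
  · -- p₁ = s i
    rcases hp₂ with ⟨hr₂, hs₂⟩ | h₂si
    · have ht1 : p₁ (Fin.last d) = 0 := by rw [h₁si]; exact hplane i
      have hAi : A i = 0 := Finset.sum_eq_zero fun k _ => by rw [h₁si]; ring
      by_cases hτ0 : a * p₁ (Fin.last d) + b * p₂ (Fin.last d) = 0
      · exfalso
        apply hqsi
        ext k
        by_cases hk : k = Fin.last d
        · subst hk
          rw [hqlast, hτ0, hplane i]
        · rw [hqk k hk, h₁si]
      · have hu : 0 < (a * p₁ (Fin.last d) + b * p₂ (Fin.last d)) ^ 2 :=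
          pow_two_pos_of_ne_zero hτ0
        have hle : (a * p₁ (Fin.last d) + b * p₂ (Fin.last d)) ^ 2 ≤ (p₂ (Fin.last d)) ^ 2 := by
          rw [ht1]
          nlinarith [mul_nonneg (by linarith : (0:ℝ) ≤ 1 - b) (sq_nonneg (p₂ (Fin.last d))),
            mul_nonneg (mul_nonneg hb (by linarith : (0:ℝ) ≤ 1 - b)) (sq_nonneg (p₂ (Fin.last d)))]
        have hpos2 : ∀ j, 0 < A j + (p₂ (Fin.last d)) ^ 2 :=
          hpos_of p₂ (fun k hk => (hproj k hk).symm) hr₂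
        have hcond2 := (hiff p₂ (fun k hk => (hproj k hk).symm) (fun j _ => hpos2 j)).1 hs₂
        rw [hAi, zero_add] at hcond2
        have hcondu := cond_mono (S := Finset.univ.erase i) P A (fun j _ => (hP j).le)
          (fun j _ => hA0 j) β N α (P i) hβ.le hN (by linarith) _ _ hu hle hcond2
        have hposq : ∀ j, 0 < A j + (a * p₁ (Fin.last d) + b * p₂ (Fin.last d)) ^ 2 :=
          fun j => add_pos_of_nonneg_of_pos (hA0 j) hu
        refine Or.inl ⟨hnr _ hqk (fun j => by rw [hqlast]; exact hposq j), ?_⟩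
        rw [hiff _ hqk (fun j _ => by rw [hqlast]; exact hposq j), hqlast, hAi, zero_add]
        exact hcondu
    · exact absurd (by rw [h₁si, h₂si]; exact Convex.combo_self hab (s i)) hqsi
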